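/- arXiv:2412.00211 — 2 statements merged into one kernel-verified Lean document; each statement's English description precedes it below -/
import Mathlib

section
/- Let n ∈ ℕ, A ∈ ℝ^{n×n}, B ∈ ℝⁿ, c ∈ ℝⁿ, D ∈ ℝ, and let ν₁ ≤ 0, ρ₁ ∈ ℝ, ε₁ > 0, ε₂ > 0. Suppose there exists a symmetric positive-definite X ∈ ℝ^{n×n} such that the symmetric (n+2)×(n+2) block matrix with row/column blocks of sizes (n,1,1) and entries: (1,1) = AᵀXA − X, (1,2) = AᵀXB − c/2, (1,3) = (ε₁ − ν₁)^{1/2} c, (2,2) = BᵀXB − D + (ε₂ − ρ₁), (2,3) = (ε₁ − ν₁)^{1/2} D, (3,3) = −1, is negative definite. Then for every input u : ℕ → ℝ and the trajectory with x(0) = 0, x(t+1) = A x(t) + B u(t), y(t) = cᵀ x(t) + D u(t), one has Σ_{t=0}^{t_f} ( y(t) u(t) + (ν₁ − ε₁) y(t)² + (ρ₁ − ε₂) u(t)² ) ≥ 0 for every t_f ∈ ℕ; that is, the system is output-feedback passive with ρ_c = −ν₁ + ε₁ and input-feedforward passive with ν_c = −ρ₁ + ε₂. -/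
/-!
The quadratic form `V x = xᵀ X x` is a storage function. Evaluating the LMI at the vector
`(x, u, √(ε₁ - ν₁) y)`, with `y = cᵀx + Du`, turns negative semidefiniteness into the one-step
dissipation inequality `V (Ax + Bu) - V x ≤ yu + (ν₁ - ε₁) y² + (ρ₁ - ε₂) u²`. Summing it along a
trajectory started at `x 0 = 0` telescopes, and `V ≥ 0` gives the passivity inequality.
-/

open Matrix

theorem sub_le_sum_range_of_sub_le {α : Type*} [AddCommGroup α] [PartialOrder α]
    [IsOrderedAddMonoid α] {V s : ℕ → α} (hstep : ∀ t, V (t + 1) - V t ≤ s t) (N : ℕ) :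
    V N - V 0 ≤ ∑ t ∈ Finset.range N, s t := by
  rw [← Finset.sum_range_sub]
  exact Finset.sum_le_sum fun t _ => hstep t

section

variable {m R : Type*} [Fintype m] [CommRing R]

theorem dotProduct_replicateCol_mulVec_const (v f : m → R) (a : R) :
    v ⬝ᵥ replicateCol (Fin 1) f *ᵥ (fun _ => a) = a * (f ⬝ᵥ v) := by
  simp [dotProduct, mulVec, Finset.mul_sum, mul_comm, mul_left_comm]

theorem const_dotProduct_replicateRow_mulVec (a : R) (f v : m → R) :
    (fun _ : Fin 1 => a) ⬝ᵥ replicateRow (Fin 1) f *ᵥ v = a * (f ⬝ᵥ v) := by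
  simp [dotProduct, mulVec]

/-- The symmetric matrix `[[P, q, b], [qᵀ, k, d], [bᵀ, d, -1]]` with blocks of sizes `(m, 1, 1)`. -/
def kypMatrix (P : Matrix m m R) (q : m → R) (k : R) (b : m → R) (d : R) :
    Matrix ((m ⊕ Fin 1) ⊕ Fin 1) ((m ⊕ Fin 1) ⊕ Fin 1) R :=
  fromBlocks
    (fromBlocks P (replicateCol (Fin 1) q) (replicateRow (Fin 1) q) (of fun _ _ => k))
    (replicateCol (Fin 1) (Sum.elim b fun _ => d))
    (replicateRow (Fin 1) (Sum.elim b fun _ => d))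
    (of fun _ _ => -1)

theorem kypMatrix_quadForm (P : Matrix m m R) (q : m → R) (k : R) (b : m → R) (d : R)
    (x : m → R) (u z : R) :
    let w := Sum.elim (Sum.elim x fun _ => u) fun _ => z
    w ⬝ᵥ kypMatrix P q k b d *ᵥ w
      = x ⬝ᵥ P *ᵥ x + 2 * u * (q ⬝ᵥ x) + k * u ^ 2 + 2 * z * (b ⬝ᵥ x + d * u) - z ^ 2 := by
  simp only [kypMatrix, fromBlocks_mulVec, Sum.elim_comp_inl, Sum.elim_comp_inr,
    sumElim_dotProduct_sumElim, dotProduct_add, dotProduct_replicateCol_mulVec_const,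
    const_dotProduct_replicateRow_mulVec]
  simp only [dotProduct, mulVec, Fin.sum_univ_one, of_apply]
  ring

theorem quadForm_mulVec_add_smul {A X : Matrix m m R} (hX : X.IsSymm) (B x : m → R) (u : R) :
    (A *ᵥ x + u • B) ⬝ᵥ X *ᵥ (A *ᵥ x + u • B)
      = x ⬝ᵥ (Aᵀ * X * A) *ᵥ x + 2 * u * ((Aᵀ *ᵥ X *ᵥ B) ⬝ᵥ x) + u ^ 2 * (B ⬝ᵥ X *ᵥ B) := by
  have hAA : (A *ᵥ x) ⬝ᵥ X *ᵥ A *ᵥ x = x ⬝ᵥ (Aᵀ * X * A) *ᵥ x := by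
    rw [← mulVec_mulVec, ← mulVec_mulVec, dotProduct_transpose_mulVec, dotProduct_comm]
  have hAB : (A *ᵥ x) ⬝ᵥ X *ᵥ B = (Aᵀ *ᵥ X *ᵥ B) ⬝ᵥ x := by
    rw [dotProduct_comm _ x, dotProduct_transpose_mulVec, dotProduct_comm]
  have hBA : B ⬝ᵥ X *ᵥ A *ᵥ x = (A *ᵥ x) ⬝ᵥ X *ᵥ B := by
    rw [← dotProduct_transpose_mulVec, hX.eq]
  simp only [mulVec_add, mulVec_smul, dotProduct_add, add_dotProduct, dotProduct_smul,
    smul_dotProduct, smul_eq_mul, hAA, hBA, hAB]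
  ring

end

section

variable {m : Type*} [Fintype m]

theorem kypMatrix_quadForm_nonpos {P : Matrix m m ℝ} {q b : m → ℝ} {k d : ℝ}
    (hM : (-kypMatrix P q k b d).PosSemidef) (x : m → ℝ) (u z : ℝ) :
    x ⬝ᵥ P *ᵥ x + 2 * u * (q ⬝ᵥ x) + k * u ^ 2 + 2 * z * (b ⬝ᵥ x + d * u) - z ^ 2 ≤ 0 := by
  have := hM.dotProduct_mulVec_nonneg (Sum.elim (Sum.elim x fun _ => u) fun _ => z)
  rw [star_trivial, neg_mulVec, dotProduct_neg, kypMatrix_quadForm] at this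
  linarith

theorem quadForm_step_le_of_kypMatrix {A X : Matrix m m ℝ} {B c : m → ℝ} {D α σ : ℝ}
    (hX : X.IsSymm)
    (hM : (-kypMatrix (Aᵀ * X * A - X) (fun i => (Aᵀ *ᵥ X *ᵥ B) i - c i / 2)
      (B ⬝ᵥ X *ᵥ B - D + σ) (fun j => √α * c j) (√α * D)).PosSemidef)
    (x : m → ℝ) (u : ℝ) :
    (A *ᵥ x + u • B) ⬝ᵥ X *ᵥ (A *ᵥ x + u • B) - x ⬝ᵥ X *ᵥ x
      ≤ (c ⬝ᵥ x + D * u) * u - α * (c ⬝ᵥ x + D * u) ^ 2 - σ * u ^ 2 := by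
  set y := c ⬝ᵥ x + D * u
  have hα : α ≤ √α ^ 2 := Real.sq_sqrt' ▸ le_max_left α 0
  have hLMI := kypMatrix_quadForm_nonpos hM x u (√α * y)
  have hq : (fun i => (Aᵀ *ᵥ X *ᵥ B) i - c i / 2) ⬝ᵥ x = (Aᵀ *ᵥ X *ᵥ B) ⬝ᵥ x - c ⬝ᵥ x / 2 := by
    simp only [dotProduct, sub_mul, div_mul_eq_mul_div, Finset.sum_sub_distrib, Finset.sum_div]
  have hb : (fun j => √α * c j) ⬝ᵥ x + √α * D * u = √α * y := by
    simp only [y, dotProduct, mul_assoc, ← Finset.mul_sum]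
    ring
  rw [sub_mulVec, dotProduct_sub, hq, hb] at hLMI
  rw [quadForm_mulVec_add_smul hX]
  linear_combination hLMI + y ^ 2 * hα

end

theorem stmt6_general (n : ℕ) (A : Matrix (Fin n) (Fin n) ℝ) (B c : Fin n → ℝ)
    (D ν₁ ρ₁ ε₁ ε₂ : ℝ)
    (hX : ∃ X : Matrix (Fin n) (Fin n) ℝ, X.PosDef ∧
      (-(Matrix.fromBlocks
        (Matrix.fromBlocks
          (Aᵀ * X * A - X)
          (Matrix.of fun i (_ : Fin 1) => Aᵀ.mulVec (X.mulVec B) i - c i / 2)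
          (Matrix.of fun (_ : Fin 1) j => Aᵀ.mulVec (X.mulVec B) j - c j / 2)
          (Matrix.of fun (_ _ : Fin 1) => B ⬝ᵥ X.mulVec B - D + (ε₂ - ρ₁)))
        (Matrix.of fun (i : Fin n ⊕ Fin 1) (_ : Fin 1) =>
          Sum.elim (fun j => Real.sqrt (ε₁ - ν₁) * c j)
            (fun _ => Real.sqrt (ε₁ - ν₁) * D) i)
        (Matrix.of fun (_ : Fin 1) (j : Fin n ⊕ Fin 1) =>
          Sum.elim (fun j => Real.sqrt (ε₁ - ν₁) * c j)
            (fun _ => Real.sqrt (ε₁ - ν₁) * D) j)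
        (Matrix.of fun (_ _ : Fin 1) => (-1 : ℝ)))).PosDef) :
    ∀ (u : ℕ → ℝ) (x : ℕ → Fin n → ℝ) (y : ℕ → ℝ),
      x 0 = 0 →
      (∀ t, x (t + 1) = A.mulVec (x t) + u t • B) →
      (∀ t, y t = c ⬝ᵥ x t + D * u t) →
      ∀ tf : ℕ,
        0 ≤ ∑ t ∈ Finset.range (tf + 1),
          (y t * u t + (ν₁ - ε₁) * (y t) ^ 2 + (ρ₁ - ε₂) * (u t) ^ 2) := by
  intro u x y hx0 hxs hy tf
  obtain ⟨X, hXpd, hM⟩ := hX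
  have hXsymm : X.IsSymm := isHermitian_iff_isSymm.mp hXpd.isHermitian
  have hstep : ∀ t, x (t + 1) ⬝ᵥ X *ᵥ x (t + 1) - x t ⬝ᵥ X *ᵥ x t
      ≤ y t * u t + (ν₁ - ε₁) * y t ^ 2 + (ρ₁ - ε₂) * u t ^ 2 := fun t => by
    have := quadForm_step_le_of_kypMatrix (α := ε₁ - ν₁) (σ := ε₂ - ρ₁) hXsymm hM.posSemidef
      (x t) (u t)
    rw [hxs, hy]
    linarith
  have hdiss := sub_le_sum_range_of_sub_le (V := fun t => x t ⬝ᵥ X *ᵥ x t) hstep (tf + 1)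
  have hVnonneg := hXpd.posSemidef.dotProduct_mulVec_nonneg (x (tf + 1))
  rw [star_trivial] at hVnonneg
  simp only [hx0, zero_dotProduct] at hdiss
  linarith

/-- Case A of Theorem 2: the KYP-type LMI (with Schur-complement block
structure of sizes (n,1,1)) certifies that the state-space system
`(A, B, cᵀ, D)` is output-feedback passive with `ρc = −ν₁ + ε₁` and
input-feedforward passive with `νc = −ρ₁ + ε₂`. -/
theorem stmt6 (n : ℕ) (A : Matrix (Fin n) (Fin n) ℝ) (B c : Fin n → ℝ)
    (D ν₁ ρ₁ ε₁ ε₂ : ℝ) (hν₁ : ν₁ ≤ 0) (hε₁ : 0 < ε₁) (hε₂ : 0 < ε₂)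
    (hX : ∃ X : Matrix (Fin n) (Fin n) ℝ, X.PosDef ∧
      (-(Matrix.fromBlocks
        (Matrix.fromBlocks
          (Aᵀ * X * A - X)
          (Matrix.of fun i (_ : Fin 1) => Aᵀ.mulVec (X.mulVec B) i - c i / 2)
          (Matrix.of fun (_ : Fin 1) j => Aᵀ.mulVec (X.mulVec B) j - c j / 2)
          (Matrix.of fun (_ _ : Fin 1) => B ⬝ᵥ X.mulVec B - D + (ε₂ - ρ₁)))
        (Matrix.of fun (i : Fin n ⊕ Fin 1) (_ : Fin 1) =>
          Sum.elim (fun j => Real.sqrt (ε₁ - ν₁) * c j)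
            (fun _ => Real.sqrt (ε₁ - ν₁) * D) i)
        (Matrix.of fun (_ : Fin 1) (j : Fin n ⊕ Fin 1) =>
          Sum.elim (fun j => Real.sqrt (ε₁ - ν₁) * c j)
            (fun _ => Real.sqrt (ε₁ - ν₁) * D) j)
        (Matrix.of fun (_ _ : Fin 1) => (-1 : ℝ)))).PosDef) :
    ∀ (u : ℕ → ℝ) (x : ℕ → Fin n → ℝ) (y : ℕ → ℝ),
      x 0 = 0 →
      (∀ t, x (t + 1) = A.mulVec (x t) + u t • B) →
      (∀ t, y t = c ⬝ᵥ x t + D * u t) →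
      ∀ tf : ℕ,
        0 ≤ ∑ t ∈ Finset.range (tf + 1),
          (y t * u t + (ν₁ - ε₁) * (y t) ^ 2 + (ρ₁ - ε₂) * (u t) ^ 2) :=
  stmt6_general n A B c D ν₁ ρ₁ ε₁ ε₂ hX
end

section
/- Let m ≥ 1, let M ≥ 2 be an integer, let h₀ > 0 and 0 < h ≤ 1, and let g : {0,…,m−1} → ℝ satisfy |g(t)| ≤ h₀ hᵗ for all t. Set ε = π h₀ · (Σ_{t=0}^{m−1} hᵗ) · (m−1)/(2M). Let c ∈ ℝ and r > 0, and set a₁ = c − r/√2, a₂ = c + r/√2. Define f_r(θ) = Σ_{t=0}^{m−1} g(t) cos(tθ) and f_i(θ) = Σ_{t=0}^{m−1} g(t) sin(tθ). Suppose that for every integer m' ∈ {0,…,M}: a₁ + ε < f_r(m'π/M) < a₂ − ε and −r/√2 + ε < f_i(m'π/M) < r/√2 − ε. Then for every θ ∈ ℝ, the complex number C(e^{iθ}) = Σ_{t=0}^{m−1} g(t) e^{−iθt} satisfies |C(e^{iθ}) − c| < r. -/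
/-!
Both `f_r` and `f_i` are Lipschitz with constant `∑ |g t| t ≤ h₀ (∑ hᵗ) (m - 1)`, and every
`φ ∈ [0, π]` lies within half a grid step `π / (2M)` of some sample `m'π/M`; so the margin `ε`
absorbs the variation between samples and the box bounds hold on all of `[0, π]`. Since `f_r` and
`|f_i|` are even and `2π`-periodic, they hold for every `θ`. Finally
`C(e^{iθ}) = f_r(θ) - i f_i(θ)` lies in the open square of half-side `r/√2` around `c`, which is
inscribed in the disk of radius `r`.
-/

open Finset Function Real Set

/-- With `F = cos` and `F = sin` these are the paper's `f_r` and `f_i`. -/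
noncomputable def firSum (g : ℕ → ℝ) (m : ℕ) (F : ℝ → ℝ) (θ : ℝ) : ℝ :=
  ∑ t ∈ range m, g t * F (t * θ)

section firSum

variable {g : ℕ → ℝ} {m : ℕ} {F : ℝ → ℝ}

theorem Function.Periodic.firSum {c : ℝ} (hF : Periodic F c) : Periodic (firSum g m F) c := by
  intro θ
  refine sum_congr rfl fun t _ => ?_
  rw [mul_add, hF.nat_mul t]

theorem Function.Even.firSum (hF : F.Even) : (firSum g m F).Even := by
  intro θ
  refine sum_congr rfl fun t _ => ?_
  rw [mul_neg, hF]

theorem Function.Odd.firSum (hF : F.Odd) : (firSum g m F).Odd := by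
  intro θ
  simp only [_root_.firSum, mul_neg, hF _, ← sum_neg_distrib]

theorem abs_firSum_sub_firSum_le (hF : ∀ x y, |F x - F y| ≤ |x - y|) (x y : ℝ) :
    |firSum g m F x - firSum g m F y| ≤ (∑ t ∈ range m, |g t| * t) * |x - y| := by
  rw [firSum, firSum, ← sum_sub_distrib, sum_mul]
  refine (abs_sum_le_sum_abs _ _).trans (sum_le_sum fun t _ => ?_)
  calc |g t * F (t * x) - g t * F (t * y)| = |g t| * |F (t * x) - F (t * y)| := by
        rw [← mul_sub, abs_mul]
    _ ≤ |g t| * |t * x - t * y| := mul_le_mul_of_nonneg_left (hF _ _) (abs_nonneg _)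
    _ = |g t| * t * |x - y| := by rw [← mul_sub, abs_mul, Nat.abs_cast, mul_assoc]

theorem sum_abs_mul_le_of_abs_le {h₀ h : ℝ} (hg : ∀ t < m, |g t| ≤ h₀ * h ^ t) :
    ∑ t ∈ range m, |g t| * t ≤ h₀ * (∑ t ∈ range m, h ^ t) * ((m : ℝ) - 1) := by
  rw [mul_sum, sum_mul]
  refine sum_le_sum fun t ht => ?_
  have htm : t < m := mem_range.mp ht
  have ht_le : (t : ℝ) ≤ m - 1 := by
    have : (t : ℝ) + 1 ≤ m := by exact_mod_cast htm
    linarith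
  calc |g t| * t ≤ |g t| * (m - 1) := mul_le_mul_of_nonneg_left ht_le (abs_nonneg _)
    _ ≤ h₀ * h ^ t * (m - 1) :=
        mul_le_mul_of_nonneg_right (hg t htm) (by linarith [t.cast_nonneg (α := ℝ)])

end firSum

theorem Function.Periodic.exists_mem_Icc_of_even {β : Type*} {f : ℝ → β} {c : ℝ}
    (hper : Periodic f (2 * c)) (heven : f.Even) (hc : 0 < c) (x : ℝ) :
    ∃ y ∈ Icc 0 c, f x = f y := by
  obtain ⟨y, ⟨hy₁, hy₂⟩, hxy⟩ := hper.exists_mem_Ico (by positivity) x (-c)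
  refine ⟨|y|, ⟨abs_nonneg y, abs_le.mpr ⟨hy₁, by linarith⟩⟩, ?_⟩
  rcases abs_choice y with hy | hy <;> rw [hy, hxy]
  exact (heven y).symm

theorem exists_nat_le_abs_sub_le_half {x : ℝ} {M : ℕ} (hx₀ : 0 ≤ x) (hxM : x ≤ M) :
    ∃ n ≤ M, |x - n| ≤ 1 / 2 := by
  have hle : (⌊x + 1 / 2⌋₊ : ℝ) ≤ x + 1 / 2 := Nat.floor_le (by positivity)
  have hlt : x + 1 / 2 < ⌊x + 1 / 2⌋₊ + 1 := Nat.lt_floor_add_one _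
  refine ⟨⌊x + 1 / 2⌋₊, ?_, abs_le.mpr ⟨by linarith, by linarith⟩⟩
  have : (⌊x + 1 / 2⌋₊ : ℝ) < M + 1 := by linarith
  exact Nat.lt_succ_iff.mp (by exact_mod_cast this)

theorem exists_nat_le_abs_sub_mul_pi_div_le {M : ℕ} (hM : 0 < M) {φ : ℝ} (hφ : φ ∈ Icc 0 π) :
    ∃ n ≤ M, |φ - n * π / M| ≤ π / (2 * M) := by
  have hM' : (0 : ℝ) < M := by exact_mod_cast hM
  obtain ⟨n, hnM, hn⟩ := exists_nat_le_abs_sub_le_half (x := φ * M / π)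
    (by have := hφ.1; positivity) (by rw [div_le_iff₀ pi_pos]; nlinarith [hφ.2])
  refine ⟨n, hnM, ?_⟩
  have hscale : φ - n * π / M = (φ * M / π - n) * (π / M) := by field_simp
  rw [hscale, abs_mul, abs_of_pos (by positivity : 0 < π / M)]
  calc |φ * M / π - n| * (π / M) ≤ 1 / 2 * (π / M) := by gcongr
    _ = π / (2 * M) := by ring

theorem mem_Ioo_of_samples_mem_Ioo {F : ℝ → ℝ} {L a b ε : ℝ} {M : ℕ} (hM : 0 < M) (hL : 0 ≤ L)
    (hF : ∀ x y, |F x - F y| ≤ L * |x - y|) (hε : L * (π / (2 * M)) ≤ ε)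
    (hsample : ∀ n ≤ M, F (n * π / M) ∈ Ioo (a + ε) (b - ε))
    {φ : ℝ} (hφ : φ ∈ Icc 0 π) : F φ ∈ Ioo a b := by
  obtain ⟨n, hnM, hn⟩ := exists_nat_le_abs_sub_mul_pi_div_le hM hφ
  have hclose : |F φ - F (n * π / M)| ≤ ε :=
    ((hF _ _).trans (mul_le_mul_of_nonneg_left hn hL)).trans hε
  obtain ⟨hlo, hhi⟩ := hsample n hnM
  rw [abs_le] at hclose
  exact ⟨by linarith [hclose.1], by linarith [hclose.2]⟩

theorem firSum_cos_sub_firSum_sin_mul_I (g : ℕ → ℝ) (m : ℕ) (θ : ℝ) :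
    ∑ t ∈ range m, (g t : ℂ) * Complex.exp (-(Complex.I * (θ * t))) =
      firSum g m cos θ - firSum g m sin θ * Complex.I := by
  simp only [firSum, Complex.ofReal_sum, sum_mul, ← sum_sub_distrib]
  refine sum_congr rfl fun t _ => ?_
  rw [show -(Complex.I * (θ * t)) = ((-(t * θ) : ℝ) : ℂ) * Complex.I by push_cast; ring,
    Complex.exp_mul_I, ← Complex.ofReal_cos, ← Complex.ofReal_sin, Real.cos_neg, Real.sin_neg]
  push_cast
  ring

open Complex in
theorem norm_ofReal_sub_mul_I_sub_ofReal_lt {a b c r : ℝ}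
    (ha : |a - c| < r / √2) (hb : |b| < r / √2) : ‖(a : ℂ) - b * I - c‖ < r := by
  have hr : 0 < r := (div_pos_iff_of_pos_right (by positivity)).mp ((abs_nonneg b).trans_lt hb)
  have hsq : (r / √2) ^ 2 = r ^ 2 / 2 := by rw [div_pow, Real.sq_sqrt zero_le_two]
  have ha' := sq_lt_sq' (abs_lt.mp ha).1 (abs_lt.mp ha).2
  have hb' := sq_lt_sq' (abs_lt.mp hb).1 (abs_lt.mp hb).2
  refine lt_of_pow_lt_pow_left₀ 2 hr.le ?_
  rw [Complex.sq_norm, normSq_apply]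
  simp only [sub_re, sub_im, mul_re, mul_im, ofReal_re, ofReal_im, I_re, I_im]
  nlinarith

theorem stmt14_general (m M : ℕ) (hM : 2 ≤ M) (h₀ h : ℝ)
    (g : ℕ → ℝ) (hg : ∀ t < m, |g t| ≤ h₀ * h ^ t)
    (c r : ℝ)
    (hbox : ∀ m' : ℕ, m' ≤ M →
      (c - r / Real.sqrt 2) +
          Real.pi * h₀ * (∑ t ∈ Finset.range m, h ^ t) * ((m : ℝ) - 1) / (2 * M) <
        (∑ t ∈ Finset.range m, g t * Real.cos (t * ((m' : ℝ) * Real.pi / M))) ∧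
      (∑ t ∈ Finset.range m, g t * Real.cos (t * ((m' : ℝ) * Real.pi / M))) <
        (c + r / Real.sqrt 2) -
          Real.pi * h₀ * (∑ t ∈ Finset.range m, h ^ t) * ((m : ℝ) - 1) / (2 * M) ∧
      -r / Real.sqrt 2 +
          Real.pi * h₀ * (∑ t ∈ Finset.range m, h ^ t) * ((m : ℝ) - 1) / (2 * M) <
        (∑ t ∈ Finset.range m, g t * Real.sin (t * ((m' : ℝ) * Real.pi / M))) ∧
      (∑ t ∈ Finset.range m, g t * Real.sin (t * ((m' : ℝ) * Real.pi / M))) <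
        r / Real.sqrt 2 -
          Real.pi * h₀ * (∑ t ∈ Finset.range m, h ^ t) * ((m : ℝ) - 1) / (2 * M)) :
    ∀ θ : ℝ,
      ‖(∑ t ∈ Finset.range m, (g t : ℂ) * Complex.exp (-(Complex.I * (θ * t)))) -
          (c : ℂ)‖ < r := by
  intro θ
  have hM₀ : 0 < M := by omega
  have hL₀ : 0 ≤ ∑ t ∈ range m, |g t| * t := by positivity
  have hε : (∑ t ∈ range m, |g t| * t) * (π / (2 * M)) ≤
      π * h₀ * (∑ t ∈ range m, h ^ t) * ((m : ℝ) - 1) / (2 * M) := by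
    refine (mul_le_mul_of_nonneg_right (sum_abs_mul_le_of_abs_le hg) ?_).trans_eq ?_
    · positivity
    · ring
  have hcos_lip := abs_firSum_sub_firSum_le (g := g) (m := m) abs_cos_sub_cos_le
  have hsin_lip := abs_firSum_sub_firSum_le (g := g) (m := m) abs_sin_sub_sin_le
  obtain ⟨φ, hφ, hθφ⟩ := (cos_periodic.firSum (g := g) (m := m)).exists_mem_Icc_of_even
    (Function.Even.firSum cos_neg) pi_pos θ
  obtain ⟨ψ, hψ, hθψ⟩ := ((sin_periodic.firSum (g := g) (m := m)).comp abs).exists_mem_Icc_of_even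
    (Function.Even.comp_odd (f := abs) abs_neg (Function.Odd.firSum sin_neg)) pi_pos θ
  have hre := mem_Ioo_of_samples_mem_Ioo hM₀ hL₀ hcos_lip hε
    (fun n hn => ⟨(hbox n hn).1, (hbox n hn).2.1⟩) hφ
  have him := mem_Ioo_of_samples_mem_Ioo hM₀ hL₀ hsin_lip hε (a := -(r / √2))
    (fun n hn => ⟨by rw [← neg_div]; exact (hbox n hn).2.2.1, (hbox n hn).2.2.2⟩) hψ
  rw [firSum_cos_sub_firSum_sin_mul_I]
  refine norm_ofReal_sub_mul_I_sub_ofReal_lt ?_ (hθψ.trans_lt (abs_lt.mpr him))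
  rw [hθφ, abs_sub_lt_iff]
  exact ⟨by linarith [hre.2], by linarith [hre.1]⟩

/-- Theorem 3, Case A (frequency-domain content): sampled box constraints on
`f_r` and `f_i`, tightened by `ε`, together with the decay constraint, force
the entire Nyquist locus of the FIR filter into the open disk of radius `r`
centred at the real point `c`. -/
theorem stmt14 (m M : ℕ) (hm : 1 ≤ m) (hM : 2 ≤ M) (h₀ h : ℝ)
    (hh₀ : 0 < h₀) (hh : 0 < h) (hh1 : h ≤ 1)
    (g : ℕ → ℝ) (hg : ∀ t < m, |g t| ≤ h₀ * h ^ t)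
    (c r : ℝ) (hr : 0 < r)
    (hbox : ∀ m' : ℕ, m' ≤ M →
      (c - r / Real.sqrt 2) +
          Real.pi * h₀ * (∑ t ∈ Finset.range m, h ^ t) * ((m : ℝ) - 1) / (2 * M) <
        (∑ t ∈ Finset.range m, g t * Real.cos (t * ((m' : ℝ) * Real.pi / M))) ∧
      (∑ t ∈ Finset.range m, g t * Real.cos (t * ((m' : ℝ) * Real.pi / M))) <
        (c + r / Real.sqrt 2) -
          Real.pi * h₀ * (∑ t ∈ Finset.range m, h ^ t) * ((m : ℝ) - 1) / (2 * M) ∧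
      -r / Real.sqrt 2 +
          Real.pi * h₀ * (∑ t ∈ Finset.range m, h ^ t) * ((m : ℝ) - 1) / (2 * M) <
        (∑ t ∈ Finset.range m, g t * Real.sin (t * ((m' : ℝ) * Real.pi / M))) ∧
      (∑ t ∈ Finset.range m, g t * Real.sin (t * ((m' : ℝ) * Real.pi / M))) <
        r / Real.sqrt 2 -
          Real.pi * h₀ * (∑ t ∈ Finset.range m, h ^ t) * ((m : ℝ) - 1) / (2 * M)) :
    ∀ θ : ℝ,
      ‖(∑ t ∈ Finset.range m, (g t : ℂ) * Complex.exp (-(Complex.I * (θ * t)))) -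
          (c : ℂ)‖ < r :=
  stmt14_general m M hM h₀ h g hg c r hbox
end
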